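/- Let g_r satisfy g_r = 1 + X*g_r^r with r ≥ 2. Then X = (X/(1+X)^r) evaluated at (g_r(X) - 1); that is, composing the series X/(1+X)^r with g_r - 1 gives X. -/

import Mathlib

open PowerSeries

/-- Composition (substitution) of formal power series: `comp f g = f(g)`,
well-defined when `g` has zero constant coefficient. -/
noncomputable def comp (f g : PowerSeries ℚ) : PowerSeries ℚ :=
  PowerSeries.mk fun n =>
    coeff n (∑ k ∈ Finset.range (n + 1), (coeff k f) • g ^ k)

section aux

variable {h : PowerSeries ℚ} (hh : ∀ k n : ℕ, n < k → coeff n (h ^ k) = 0)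

include hh

lemma coeff_aeval (P : Polynomial ℚ) (n : ℕ) :
    coeff n (Polynomial.aeval h P) =
      ∑ k ∈ Finset.range (n + 1), P.coeff k * coeff n (h ^ k) := by
  classical
  rw [Polynomial.aeval_eq_sum_range' (n := max (P.natDegree + 1) (n + 1))
      (lt_of_lt_of_le (Nat.lt_succ_self _) (le_max_left _ _))]
  rw [map_sum]
  rw [← Finset.sum_subset (Finset.range_subset_range.2 (le_max_right (P.natDegree + 1) (n + 1)))]
  · exact Finset.sum_congr rfl fun k _ => by simp [smul_eq_mul]
  · intro k _ hk
    simp only [Finset.mem_range, not_lt] at hk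
    rw [map_smul, hh k n (lt_of_lt_of_le (Nat.lt_succ_self n |>.trans_le hk) le_rfl)]
    · simp

lemma coeff_comp (f : PowerSeries ℚ) (n : ℕ) :
    coeff n (comp f h) =
      ∑ k ∈ Finset.range (n + 1), coeff k f * coeff n (h ^ k) := by
  simp [comp, coeff_mk]

lemma coeff_comp_eq_aeval_trunc (f : PowerSeries ℚ) {n N : ℕ} (hn : n < N) :
    coeff n (comp f h) = coeff n (Polynomial.aeval h (trunc N f)) := by
  rw [coeff_comp hh, coeff_aeval hh]
  refine Finset.sum_congr rfl fun k hk => ?_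
  rw [coeff_trunc]
  simp only [Finset.mem_range] at hk
  rw [if_pos (lt_of_lt_of_le hk hn)]

lemma comp_mul (f₁ f₂ : PowerSeries ℚ) :
    comp (f₁ * f₂) h = comp f₁ h * comp f₂ h := by
  ext n
  rw [coeff_comp_eq_aeval_trunc hh (f := f₁ * f₂) (Nat.lt_succ_self n)]
  have key : coeff n (Polynomial.aeval h (trunc (n+1) (f₁ * f₂))) =
      coeff n (Polynomial.aeval h (trunc (n+1) f₁ * trunc (n+1) f₂)) := by
    rw [coeff_aeval hh, coeff_aeval hh]
    refine Finset.sum_congr rfl fun k hk => ?_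
    simp only [Finset.mem_range] at hk
    congr 1
    rw [coeff_trunc, if_pos hk, Polynomial.coeff_mul, PowerSeries.coeff_mul]
    refine Finset.sum_congr rfl fun p hp => ?_
    rw [Finset.HasAntidiagonal.mem_antidiagonal] at hp
    rw [coeff_trunc, coeff_trunc, if_pos, if_pos]
    · omega
    · omega
  rw [key, map_mul, PowerSeries.coeff_mul, PowerSeries.coeff_mul]
  refine Finset.sum_congr rfl fun p hp => ?_
  rw [Finset.HasAntidiagonal.mem_antidiagonal] at hp
  rw [coeff_comp_eq_aeval_trunc hh (f := f₁) (N := n+1) (by omega),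
      coeff_comp_eq_aeval_trunc hh (f := f₂) (N := n+1) (by omega)]

lemma comp_one : comp 1 h = 1 := by
  ext n
  rw [coeff_comp hh]
  rcases Nat.eq_zero_or_pos n with rfl | hn
  · simp
  · rw [Finset.sum_eq_single 0]
    · simp [coeff_one, hn.ne']
    · intro k hk hk0
      rw [coeff_one, if_neg hk0, zero_mul]
    · simp
    
lemma comp_X : comp X h = h := by
  ext n
  rw [coeff_comp hh]
  rw [Finset.sum_eq_single 1]
  · simp
  · intro k hk hk1
    rw [coeff_X, if_neg hk1, zero_mul]
  · intro hn
    simp only [Finset.mem_range, not_lt] at hn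
    have : n = 0 := by omega
    subst this
    have := hh 1 0 one_pos
    rw [pow_one] at this
    simpa using this

end aux

lemma comp_add (h f₁ f₂ : PowerSeries ℚ) :
    comp (f₁ + f₂) h = comp f₁ h + comp f₂ h := by
  ext n
  simp [comp, coeff_mk, add_smul, Finset.sum_add_distrib]

lemma comp_pow {h : PowerSeries ℚ} (hh : ∀ k n : ℕ, n < k → coeff n (h ^ k) = 0)
    (f : PowerSeries ℚ) (m : ℕ) : comp (f ^ m) h = (comp f h) ^ m := by
  induction m with
  | zero => simpa using comp_one hh
  | succ m ih => rw [pow_succ, comp_mul hh, ih, pow_succ]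

theorem stmt_6 (r : ℕ) (hr : 2 ≤ r) (g : PowerSeries ℚ)
    (hg : g = 1 + X * g ^ r) :
    comp (X * ((1 + X) ^ r)⁻¹) (g - 1) = X := by
  set h : PowerSeries ℚ := g - 1 with hdef
  have hX : h = X * g ^ r := by
    rw [hdef]
    conv_lhs => rw [hg]
    ring
  have hh : ∀ k n : ℕ, n < k → coeff n (h ^ k) = 0 := by
    intro k n hn
    have : (X : PowerSeries ℚ) ^ k ∣ h ^ k := ⟨(g ^ r) ^ k, by rw [hX, mul_pow]⟩
    exact PowerSeries.X_pow_dvd_iff.mp this n hn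
  have hc : constantCoeff ((1 + X : PowerSeries ℚ) ^ r) ≠ 0 := by
    simp
  have hu : ((1 + X : PowerSeries ℚ) ^ r)⁻¹ * (1 + X) ^ r = 1 :=
    PowerSeries.inv_mul_cancel _ hc
  have h1X : comp ((1 + X : PowerSeries ℚ) ^ r) h = g ^ r := by
    rw [comp_pow hh, comp_add, comp_one hh, comp_X hh, hdef]
    congr 1
    ring
  have hinv : comp (((1 + X : PowerSeries ℚ) ^ r)⁻¹) h * g ^ r = 1 := by
    rw [← h1X, ← comp_mul hh, hu, comp_one hh]
  rw [comp_mul hh, comp_X hh]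
  nth_rewrite 1 [hX]
  rw [mul_assoc, mul_comm (g ^ r), hinv, mul_one]
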